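/- For every m ≥ 1, the number of 321-avoiding involutions of {1,…,2m} equals twice the number of 321-avoiding involutions of {1,…,2m−1}, i.e. |I(321)_{2m}| = 2·|I(321)_{2m−1}|. -/

import Mathlib

/-!
Read a set `E ⊆ {0, …, n-1}` as the lattice path that steps up at the positions in `E` and down
elsewhere. For an involution `π`, the path of its weak excedance set `{i | i ≤ π i}` never goes
below zero, since `π` sends each down-step to an earlier up-step. If `π` also avoids 321, it is
increasing on its weak excedances, so it pairs its non-fixed weak excedances with the down-steps
in increasing order; and its fixed points are exactly the up-steps never matched by a later
down-step (each fixed point is one, and both sets have the final height as cardinality). Conversely,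
pairing the matched up-steps of any ballot path with its down-steps in increasing order gives a
321-avoiding involution, so `I(321)_n` is in bijection with ballot paths of length `n`. After an
odd number of steps such a path is at positive height, so the next step is free.
-/

/-- A permutation of `Fin n` avoids the pattern 321 if there are no indices
`i < j < k` with `π i > π j > π k`. -/
def Avoids321 {n : ℕ} (π : Equiv.Perm (Fin n)) : Prop :=
  ¬ ∃ i j k : Fin n, i < j ∧ j < k ∧ π k < π j ∧ π j < π i

/-- A permutation is an involution if it is its own inverse pointwise. -/
def IsInvolution {n : ℕ} (π : Equiv.Perm (Fin n)) : Prop :=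
  ∀ i, π (π i) = i

/-- A finset of `Fin n` consists of consecutive integers iff it is order-convex. -/
def IsConsecutive {n : ℕ} (I : Finset (Fin n)) : Prop :=
  ∀ x ∈ I, ∀ y ∈ I, ∀ z : Fin n, x ≤ z → z ≤ y → z ∈ I

/-- A permutation is simple if every interval (a set of consecutive integers whose
image is also a set of consecutive integers) has cardinality at most 1 or `n`. -/
def IsSimplePerm {n : ℕ} (π : Equiv.Perm (Fin n)) : Prop :=
  ∀ I : Finset (Fin n), IsConsecutive I → IsConsecutive (I.image π) →
    I.card ≤ 1 ∨ I.card = n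

/-- A permutation of `{1,…,n}` (here 0-indexed on `Fin n`) is sum-decomposable
(of type 12) if it maps some proper nonempty initial segment onto itself. -/
def SumDecomposable {n : ℕ} (π : Equiv.Perm (Fin n)) : Prop :=
  ∃ k : ℕ, 1 ≤ k ∧ k < n ∧
    (π : Fin n → Fin n) '' {i : Fin n | (i : ℕ) < k} = {i : Fin n | (i : ℕ) < k}

/-- A permutation is skew-decomposable (of type 21) if it maps some proper nonempty
initial segment onto the corresponding final segment. -/
def SkewDecomposable {n : ℕ} (π : Equiv.Perm (Fin n)) : Prop :=
  ∃ k : ℕ, 1 ≤ k ∧ k < n ∧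
    (π : Fin n → Fin n) '' {i : Fin n | (i : ℕ) < k} = {i : Fin n | n - k ≤ (i : ℕ)}

open Finset

section SwapAlong

variable {α : Type*} [DecidableEq α] {S D : Finset α}

def swapAlong (hSD : Disjoint S D) (φ : S ≃ D) : Equiv.Perm α :=
  Function.Involutive.toPerm
    (fun x => if hx : x ∈ S then φ ⟨x, hx⟩ else if hx : x ∈ D then φ.symm ⟨x, hx⟩ else x)
    fun x => by
      by_cases hS : x ∈ S
      · simp [hS, disjoint_right.1 hSD (φ ⟨x, hS⟩).2]
      · by_cases hD : x ∈ D <;> simp [hS, hD]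

variable (hSD : Disjoint S D) (φ : S ≃ D)

lemma swapAlong_involutive : Function.Involutive (swapAlong hSD φ) :=
  Function.Involutive.toPerm_involutive _

lemma swapAlong_apply_left (s : S) : swapAlong hSD φ s = φ s :=
  dif_pos s.2

lemma swapAlong_apply_right (d : D) : swapAlong hSD φ d = φ.symm d :=
  (dif_neg (disjoint_right.1 hSD d.2)).trans (dif_pos d.2)

lemma swapAlong_apply_of_notMem {x : α} (hS : x ∉ S) (hD : x ∉ D) : swapAlong hSD φ x = x :=
  (dif_neg hS).trans (dif_neg hD)

lemma eq_swapAlong {σ : Equiv.Perm α} (hσ : Function.Involutive σ) (hφ : ∀ s : S, σ s = φ s)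
    (hfix : ∀ x, x ∉ S → x ∉ D → σ x = x) : σ = swapAlong hSD φ := by
  ext x
  by_cases hS : x ∈ S
  · rw [hφ ⟨x, hS⟩, swapAlong_apply_left hSD φ ⟨x, hS⟩]
  · by_cases hD : x ∈ D
    · have hx : x = σ (φ.symm ⟨x, hD⟩) := by rw [hφ, φ.apply_symm_apply]
      rw [swapAlong_apply_right hSD φ ⟨x, hD⟩]
      conv_lhs => rw [hx, hσ]
    · rw [hfix x hS hD, swapAlong_apply_of_notMem hSD φ hS hD]

end SwapAlong

section

variable {n : ℕ}

def countBelow (s : Finset (Fin n)) (j : ℕ) : ℕ := #(s.filter fun i : Fin n => i < j)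

lemma countBelow_succ (s : Finset (Fin n)) (x : Fin n) :
    countBelow s (x + 1) = countBelow s x + if x ∈ s then 1 else 0 := by
  have : (s.filter fun i : Fin n => i < (x : ℕ) + 1) =
      (s.filter fun i : Fin n => i < (x : ℕ)) ∪ s.filter (· = x) := by
    ext i; simp [le_iff_lt_or_eq, and_or_left, Fin.val_inj]
  rw [countBelow, this,
    card_union_of_disjoint (disjoint_filter.2 fun i _ h h' => by simp [h'] at h), filter_eq']
  split_ifs <;> rfl

lemma countBelow_of_le (s : Finset (Fin n)) {j : ℕ} (hj : n ≤ j) : countBelow s j = #s := by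
  rw [countBelow, filter_true_of_mem fun i _ => i.isLt.trans_le hj]

lemma countBelow_mono (s : Finset (Fin n)) {a b : ℕ} (hab : a ≤ b) :
    countBelow s a ≤ countBelow s b :=
  card_le_card <| monotone_filter_right _ fun _ _ h => lt_of_lt_of_le h hab

lemma countBelow_add_card_Ico (s : Finset (Fin n)) {a b : ℕ} (hab : a ≤ b) :
    countBelow s a + #(s.filter fun i : Fin n => a ≤ i ∧ i < b) = countBelow s b := by
  rw [countBelow, countBelow, ← card_union_of_disjoint]
  · congr 1; ext i; simp only [mem_union, mem_filter, ← and_or_left]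
    exact and_congr_right fun _ => by omega
  · exact disjoint_filter.2 fun _ _ h h' => by have := h'.1; omega

lemma countBelow_sdiff_add (s : Finset (Fin n)) {t : Finset (Fin n)} (hts : t ⊆ s) (j : ℕ) :
    countBelow (s \ t) j + countBelow t j = countBelow s j := by
  rw [countBelow, countBelow, countBelow, ← card_union_of_disjoint
    (disjoint_filter_filter sdiff_disjoint), ← filter_union, sdiff_union_of_subset hts]

lemma lt_iff_countBelow_lt {s : Finset (Fin n)} {x : Fin n} (hx : x ∈ s) {j : ℕ} :
    x < j ↔ countBelow s x < countBelow s j := by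
  refine ⟨fun h => card_lt_card ⟨monotone_filter_right _ fun i _ h' => h'.trans h, fun hsub => ?_⟩,
    fun h => ?_⟩
  · simpa using (mem_filter.1 (hsub (mem_filter.2 ⟨hx, h⟩))).2
  · by_contra! h'
    exact (countBelow_mono s h').not_gt h

def pathHeight (E : Finset (Fin n)) (j : ℕ) : ℤ := countBelow E j - countBelow Eᶜ j

def IsBallot (E : Finset (Fin n)) : Prop := ∀ j, 0 ≤ pathHeight E j

-- The up-steps never matched by a later down-step: open brackets that are never closed.
open scoped Classical in
noncomputable def unmatchedUps (E : Finset (Fin n)) : Finset (Fin n) :=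
  E.filter fun u => ∀ z : ℕ, u < z → pathHeight E (u + 1) ≤ pathHeight E z

noncomputable def matchedUps (E : Finset (Fin n)) : Finset (Fin n) := E \ unmatchedUps E

lemma unmatchedUps_subset (E : Finset (Fin n)) : unmatchedUps E ⊆ E := by
  classical exact filter_subset _ _

lemma matchedUps_subset (E : Finset (Fin n)) : matchedUps E ⊆ E := sdiff_subset

section PathHeight

variable (E : Finset (Fin n))

lemma pathHeight_zero : pathHeight E 0 = 0 := by
  simp [pathHeight, countBelow]

lemma pathHeight_succ (x : Fin n) :
    pathHeight E (x + 1) = pathHeight E x + if x ∈ E then 1 else -1 := by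
  simp only [pathHeight, countBelow_succ, mem_compl]
  split_ifs <;> push_cast <;> ring

lemma pathHeight_of_le {j : ℕ} (hj : n ≤ j) : pathHeight E j = #E - #Eᶜ := by
  rw [pathHeight, countBelow_of_le _ hj, countBelow_of_le _ hj]

lemma pathHeight_sub_pathHeight {a b : ℕ} (hab : a ≤ b) :
    pathHeight E b - pathHeight E a =
      #(E.filter fun i : Fin n => a ≤ i ∧ i < b) - #(Eᶜ.filter fun i : Fin n => a ≤ i ∧ i < b) := by
  rw [pathHeight, pathHeight, ← countBelow_add_card_Ico E hab, ← countBelow_add_card_Ico Eᶜ hab]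
  push_cast; ring

lemma pathHeight_eq_matchedUps_add_unmatchedUps (j : ℕ) :
    pathHeight E j =
      countBelow (matchedUps E) j + countBelow (unmatchedUps E) j - countBelow Eᶜ j := by
  rw [pathHeight, ← countBelow_sdiff_add E (unmatchedUps_subset E) j, matchedUps]
  push_cast; ring

variable {E}

lemma pathHeight_succ_of_mem {x : Fin n} (hx : x ∈ E) :
    pathHeight E (x + 1) = pathHeight E x + 1 := by
  rw [pathHeight_succ, if_pos hx]

lemma exists_last_up_step {v : ℤ} (hv : 0 < v) :
    ∀ b : ℕ, v ≤ pathHeight E b → ∃ u : Fin n, u < b ∧ u ∈ E ∧ pathHeight E (u + 1) = v ∧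
      ∀ z : ℕ, u < z → z ≤ b → v ≤ pathHeight E z
  | 0, h => by simp [pathHeight_zero] at h; omega
  | b + 1, h => by
    by_cases hb : v ≤ pathHeight E b
    · obtain ⟨u, hub, huE, hu, htail⟩ := exists_last_up_step hv b hb
      refine ⟨u, by omega, huE, hu, fun z huz hzb => ?_⟩
      rcases hzb.lt_or_eq with hzb | rfl
      · exact htail z huz (by omega)
      · exact h
    · have hbn : b < n := by
        by_contra! hbn
        rw [pathHeight_of_le E hbn, pathHeight_of_le E (by omega)] at *
        exact hb h
      have hstep := pathHeight_succ E ⟨b, hbn⟩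
      split_ifs at hstep with hbE
      · refine ⟨⟨b, hbn⟩, lt_add_one b, hbE, by simp only at hstep ⊢; omega, fun z hbz hzb => ?_⟩
        obtain rfl : z = b + 1 := by simp only at hbz; omega
        exact h
      · simp only at hstep; omega

lemma pathHeight_ne_zero_of_odd (hn : Odd n) : pathHeight E n ≠ 0 := by
  have := card_compl E
  have := card_le_univ E
  rw [pathHeight_of_le E le_rfl, Fintype.card_fin] at *
  obtain ⟨k, rfl⟩ := hn
  omega

end PathHeight

section Unmatched

variable {E : Finset (Fin n)}

lemma mem_unmatchedUps {u : Fin n} :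
    u ∈ unmatchedUps E ↔ u ∈ E ∧ ∀ z : ℕ, u < z → pathHeight E (u + 1) ≤ pathHeight E z := by
  classical simp [unmatchedUps]

lemma countBelow_unmatchedUps_le (hE : IsBallot E) (j : ℕ) :
    (countBelow (unmatchedUps E) j : ℤ) ≤ pathHeight E j := by
  have hmaps : Set.MapsTo (fun u : Fin n => pathHeight E (u + 1))
      ((unmatchedUps E).filter fun u : Fin n => u < j) (Icc 1 (pathHeight E j)) := by
    intro u hu
    obtain ⟨hu, huj⟩ := mem_filter.1 hu
    obtain ⟨huE, hcut⟩ := mem_unmatchedUps.1 hu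
    have := hE u
    simp only [coe_Icc, Set.mem_Icc, pathHeight_succ_of_mem huE]
    exact ⟨by omega, pathHeight_succ_of_mem huE ▸ hcut j huj⟩
  have hinj : Set.InjOn (fun u : Fin n => pathHeight E (u + 1))
      ((unmatchedUps E).filter fun u : Fin n => u < j) := by
    refine StrictMonoOn.injOn fun u hu u' hu' huu' => ?_
    have hu' := mem_unmatchedUps.1 (mem_filter.1 hu').1
    have := (mem_unmatchedUps.1 (mem_filter.1 hu).1).2 u' huu'
    simp only [pathHeight_succ_of_mem hu'.1]
    omega
  have := card_le_card_of_injOn _ hmaps hinj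
  rw [Int.card_Icc] at this
  have := hE j
  unfold countBelow
  omega

lemma le_countBelow_unmatchedUps {b : ℕ} (hb : ∀ z, b ≤ z → pathHeight E b ≤ pathHeight E z) :
    pathHeight E b ≤ countBelow (unmatchedUps E) b := by
  have hsub : Icc 1 (pathHeight E b) ⊆ ((unmatchedUps E).filter fun u : Fin n => u < b).image
      fun u : Fin n => pathHeight E (u + 1) := by
    intro v hv
    obtain ⟨hv1, hvb⟩ := mem_Icc.1 hv
    obtain ⟨u, hub, huE, hu, htail⟩ := exists_last_up_step (by omega) b hvb
    refine mem_image.2 ⟨u, mem_filter.2 ⟨mem_unmatchedUps.2 ⟨huE, fun z huz => ?_⟩, hub⟩, hu⟩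
    rcases le_or_gt z b with hzb | hbz
    · exact hu ▸ htail z huz hzb
    · exact hu ▸ hvb.trans (hb z hbz.le)
  have := (card_le_card hsub).trans card_image_le
  rw [Int.card_Icc] at this
  unfold countBelow
  omega

lemma countBelow_compl_le_countBelow_matchedUps (hE : IsBallot E) (j : ℕ) :
    countBelow Eᶜ j ≤ countBelow (matchedUps E) j := by
  have := countBelow_unmatchedUps_le hE j
  have := hE j
  rw [pathHeight_eq_matchedUps_add_unmatchedUps] at *
  omega

lemma countBelow_compl_eq_countBelow_matchedUps {g : Fin n} (hg : g ∈ unmatchedUps E)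
    (hE : IsBallot E) : countBelow Eᶜ g = countBelow (matchedUps E) g := by
  obtain ⟨hgE, hcut⟩ := mem_unmatchedUps.1 hg
  have hb : ∀ z, (g : ℕ) ≤ z → pathHeight E g ≤ pathHeight E z := by
    intro z hz
    rcases hz.lt_or_eq with hz | rfl
    · have := hcut z hz
      rw [pathHeight_succ_of_mem hgE] at this
      omega
    · rfl
  have := countBelow_unmatchedUps_le hE g
  have := le_countBelow_unmatchedUps hb
  rw [pathHeight_eq_matchedUps_add_unmatchedUps] at *
  omega

lemma card_unmatchedUps (hE : IsBallot E) : (#(unmatchedUps E) : ℤ) = #E - #Eᶜ := by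
  have hb : ∀ z, n ≤ z → pathHeight E n ≤ pathHeight E z := fun z hz => by
    rw [pathHeight_of_le E hz, pathHeight_of_le E le_rfl]
  have := countBelow_unmatchedUps_le hE n
  have := le_countBelow_unmatchedUps hb
  rw [pathHeight_of_le E le_rfl, countBelow_of_le _ le_rfl] at *
  omega

lemma card_matchedUps (hE : IsBallot E) : #(matchedUps E) = #Eᶜ := by
  have := card_unmatchedUps hE
  have := card_sdiff_add_card_eq_card (unmatchedUps_subset E)
  rw [matchedUps]
  omega

end Unmatched

section OrderIso

variable {S D : Finset (Fin n)}

lemma countBelow_orderIso_apply (φ : S ≃o D) (s : S) :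
    countBelow D (φ s : Fin n) = countBelow S (s : Fin n) := by
  symm
  refine card_bij (fun t ht => (φ ⟨t, (mem_filter.1 ht).1⟩ : Fin n)) (fun t ht => ?_)
    (fun t ht t' ht' h => ?_) (fun d hd => ?_)
  · obtain ⟨htS, hts⟩ := mem_filter.1 ht
    exact mem_filter.2 ⟨(φ _).2, φ.lt_iff_lt.2 (show (⟨t, htS⟩ : S) < s from hts)⟩
  · simpa using φ.injective (Subtype.ext h)
  · obtain ⟨hdD, hds⟩ := mem_filter.1 hd
    refine ⟨φ.symm ⟨d, hdD⟩, mem_filter.2 ⟨(φ.symm _).2, ?_⟩, by simp⟩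
    exact φ.symm_apply_lt.2 (show (⟨d, hdD⟩ : D) < φ s from hds)

lemma lt_orderIso_apply (hSD : Disjoint S D) (hcount : ∀ j, countBelow D j ≤ countBelow S j)
    (φ : S ≃o D) (s : S) : (s : Fin n) < φ s := by
  have hD := countBelow_succ D (φ s)
  have hS := countBelow_succ S (φ s)
  rw [if_pos (φ s).2] at hD
  rw [if_neg (disjoint_right.1 hSD (φ s).2)] at hS
  have := hcount ((φ s : Fin n) + 1)
  rw [Fin.lt_def, lt_iff_countBelow_lt s.2, ← countBelow_orderIso_apply φ]
  omega

lemma orderIso_apply_lt (φ : S ≃o D) {g : Fin n} (hg : countBelow D g = countBelow S g) {s : S}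
    (hs : (s : Fin n) < g) : (φ s : Fin n) < g := by
  rw [Fin.lt_def, lt_iff_countBelow_lt s.2] at hs
  rw [Fin.lt_def, lt_iff_countBelow_lt (φ s).2, countBelow_orderIso_apply, hg]
  exact hs

end OrderIso

def weakExcedances (π : Equiv.Perm (Fin n)) : Finset (Fin n) := univ.filter fun i => i ≤ π i

section Permutation

variable {π : Equiv.Perm (Fin n)}

lemma mem_weakExcedances {i : Fin n} : i ∈ weakExcedances π ↔ i ≤ π i := by
  simp [weakExcedances]

lemma avoids321_of_strictMonoOn {s : Set (Fin n)} (h : StrictMonoOn π s) (hc : StrictMonoOn π sᶜ) :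
    Avoids321 π := by
  rintro ⟨i, j, k, hij, hjk, hkj, hji⟩
  have key : ∀ a b, a < b → π b < π a → (a ∈ s ↔ b ∉ s) := fun a b hab hba => by
    constructor
    · exact fun ha hb => (h ha hb hab).not_gt hba
    · exact fun hb => by_contra fun ha => (hc ha hb hab).not_gt hba
  have := key i j hij hji
  have := key j k hjk hkj
  have := key i k (hij.trans hjk) (hkj.trans hji)
  tauto

lemma strictMonoOn_weakExcedances (hπ : IsInvolution π) (ha : Avoids321 π) :
    StrictMonoOn π (weakExcedances π : Set (Fin n)) := by
  intro i hi j hj hij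
  rw [mem_coe, mem_weakExcedances] at hi hj
  by_contra! hji
  have hji : π j < π i := hji.lt_of_ne (π.injective.ne hij.ne')
  exact ha ⟨i, j, π i, hij, hj.trans_lt hji, by rw [hπ]; exact hij.trans_le hj, hji⟩

lemma lt_apply_of_fixed_lt (hπ : IsInvolution π) (ha : Avoids321 π) {u i : Fin n} (hu : π u = u)
    (hui : u < i) : u < π i := by
  by_contra! hiu
  rcases hiu.lt_or_eq with hiu | hiu
  · exact ha ⟨π i, u, i, hiu, hui, by rwa [hu], by rwa [hπ, hu]⟩
  · exact hui.ne (by rw [← hπ i, hiu, hu])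

lemma isBallot_weakExcedances (hπ : IsInvolution π) : IsBallot (weakExcedances π) := by
  intro j
  have : countBelow (weakExcedances π)ᶜ j ≤ countBelow (weakExcedances π) j := by
    refine card_le_card_of_injOn π (fun d hd => ?_) π.injective.injOn
    simp only [coe_filter, Set.mem_ofPred_eq, mem_compl, mem_weakExcedances, not_le] at hd ⊢
    exact ⟨by rw [hπ]; exact hd.1.le, by omega⟩
  rw [pathHeight]
  omega

lemma compl_support_subset_unmatchedUps (hπ : IsInvolution π) (ha : Avoids321 π) :
    π.supportᶜ ⊆ unmatchedUps (weakExcedances π) := by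
  intro u hu
  rw [mem_compl, Equiv.Perm.mem_support, not_not] at hu
  refine mem_unmatchedUps.2 ⟨mem_weakExcedances.2 hu.ge, fun z huz => ?_⟩
  have hwindow : #((weakExcedances π)ᶜ.filter fun i : Fin n => (u : ℕ) + 1 ≤ i ∧ i < z) ≤
      #((weakExcedances π).filter fun i : Fin n => (u : ℕ) + 1 ≤ i ∧ i < z) := by
    refine card_le_card_of_injOn π (fun d hd => ?_) π.injective.injOn
    simp only [coe_filter, Set.mem_ofPred_eq, mem_compl, mem_weakExcedances, not_le] at hd ⊢
    have := lt_apply_of_fixed_lt hπ ha hu (show u < d by rw [Fin.lt_def]; omega)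
    rw [Fin.lt_def] at this hd
    exact ⟨by rw [hπ]; exact hd.1.le, by omega, by omega⟩
  have := pathHeight_sub_pathHeight (weakExcedances π) (show (u : ℕ) + 1 ≤ z by omega)
  omega

lemma mem_weakExcedances_sdiff_compl_support {x : Fin n} :
    x ∈ weakExcedances π \ π.supportᶜ ↔ x < π x := by
  rw [mem_sdiff, mem_weakExcedances, mem_compl, Equiv.Perm.mem_support, not_not, lt_iff_le_and_ne,
    ne_comm]

lemma card_compl_support (hπ : IsInvolution π) :
    (#π.supportᶜ : ℤ) = #(weakExcedances π) - #(weakExcedances π)ᶜ := by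
  have hsub : π.supportᶜ ⊆ weakExcedances π := fun x hx => by
    rw [mem_compl, Equiv.Perm.mem_support, not_not] at hx
    exact mem_weakExcedances.2 hx.ge
  have hmap : (weakExcedances π)ᶜ.map π.toEmbedding = weakExcedances π \ π.supportᶜ := by
    ext x
    rw [mem_map_equiv, π.symm_apply_eq.2 (hπ x).symm, mem_compl, mem_weakExcedances, hπ, not_le,
      mem_weakExcedances_sdiff_compl_support]
  rw [← card_map (s := (weakExcedances π)ᶜ) π.toEmbedding, hmap, card_sdiff_of_subset hsub,
    Nat.cast_sub (card_le_card hsub)]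
  ring

lemma unmatchedUps_weakExcedances (hπ : IsInvolution π) (ha : Avoids321 π) :
    unmatchedUps (weakExcedances π) = π.supportᶜ := by
  refine (eq_of_subset_of_card_le (compl_support_subset_unmatchedUps hπ ha) ?_).symm
  have := card_unmatchedUps (isBallot_weakExcedances hπ)
  have := card_compl_support hπ
  omega

lemma mem_matchedUps_weakExcedances (hπ : IsInvolution π) (ha : Avoids321 π) {x : Fin n} :
    x ∈ matchedUps (weakExcedances π) ↔ x < π x := by
  rw [matchedUps, unmatchedUps_weakExcedances hπ ha, mem_weakExcedances_sdiff_compl_support]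

end Permutation

section MatchingInvolution

variable {E : Finset (Fin n)}

lemma disjoint_matchedUps_compl (E : Finset (Fin n)) : Disjoint (matchedUps E) Eᶜ :=
  disjoint_compl_right.mono_left (matchedUps_subset E)

lemma mem_unmatchedUps_of_notMem {x : Fin n} (hS : x ∉ matchedUps E) (hD : x ∉ Eᶜ) :
    x ∈ unmatchedUps E := by
  rw [mem_compl, not_not] at hD
  by_contra hU
  exact hS (mem_sdiff.2 ⟨hD, hU⟩)

-- Pairs the matched up-steps with the down-steps in increasing order, not by nesting.
noncomputable def matchingIso (hE : IsBallot E) : matchedUps E ≃o (Eᶜ : Finset (Fin n)) :=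
  ((matchedUps E).orderIsoOfFin (card_matchedUps hE)).symm.trans (Eᶜ.orderIsoOfFin rfl)

noncomputable def matchingInvolution (hE : IsBallot E) : Equiv.Perm (Fin n) :=
  swapAlong (disjoint_matchedUps_compl E) (matchingIso hE).toEquiv

variable (hE : IsBallot E)

lemma lt_matchingIso (s : matchedUps E) : (s : Fin n) < matchingIso hE s :=
  lt_orderIso_apply (disjoint_matchedUps_compl E) (countBelow_compl_le_countBelow_matchedUps hE) _ s

lemma matchingIso_lt {g : Fin n} (hg : g ∈ unmatchedUps E) {s : matchedUps E}
    (hs : (s : Fin n) < g) :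
    (matchingIso hE s : Fin n) < g :=
  orderIso_apply_lt _ (countBelow_compl_eq_countBelow_matchedUps hg hE) hs

lemma matchingInvolution_apply_matchedUps (s : matchedUps E) :
    matchingInvolution hE s = matchingIso hE s :=
  swapAlong_apply_left _ _ s

lemma matchingInvolution_apply_compl (d : (Eᶜ : Finset (Fin n))) :
    matchingInvolution hE d = (matchingIso hE).symm d :=
  swapAlong_apply_right _ _ d

lemma matchingInvolution_apply_unmatchedUps {x : Fin n} (hx : x ∈ unmatchedUps E) :
    matchingInvolution hE x = x :=
  swapAlong_apply_of_notMem _ _ (fun h => (mem_sdiff.1 h).2 hx)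
    (fun h => mem_compl.1 h (unmatchedUps_subset E hx))

lemma isInvolution_matchingInvolution : IsInvolution (matchingInvolution hE) :=
  swapAlong_involutive _ _

lemma weakExcedances_matchingInvolution : weakExcedances (matchingInvolution hE) = E := by
  ext x
  rw [mem_weakExcedances]
  by_cases hS : x ∈ matchedUps E
  · rw [matchingInvolution_apply_matchedUps hE ⟨x, hS⟩]
    exact iff_of_true (lt_matchingIso hE ⟨x, hS⟩).le (matchedUps_subset E hS)
  by_cases hD : x ∈ Eᶜ
  · rw [matchingInvolution_apply_compl hE ⟨x, hD⟩]
    refine iff_of_false (not_le.2 ?_) (mem_compl.1 hD)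
    simpa using lt_matchingIso hE ((matchingIso hE).symm ⟨x, hD⟩)
  · have hU := mem_unmatchedUps_of_notMem hS hD
    rw [matchingInvolution_apply_unmatchedUps hE hU]
    exact iff_of_true le_rfl (unmatchedUps_subset E hU)

lemma avoids321_matchingInvolution : Avoids321 (matchingInvolution hE) := by
  refine avoids321_of_strictMonoOn (s := (E : Set (Fin n))) (fun x hx y hy hxy => ?_)
    (fun x hx y hy hxy => ?_)
  · have hU {z : Fin n} (hz : z ∈ E) (hS : z ∉ matchedUps E) : z ∈ unmatchedUps E :=
      mem_unmatchedUps_of_notMem hS (by rwa [mem_compl, not_not])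
    by_cases hxS : x ∈ matchedUps E <;> by_cases hyS : y ∈ matchedUps E
    · rw [matchingInvolution_apply_matchedUps hE ⟨x, hxS⟩,
        matchingInvolution_apply_matchedUps hE ⟨y, hyS⟩]
      exact (matchingIso hE).strictMono (show (⟨x, hxS⟩ : matchedUps E) < ⟨y, hyS⟩ from hxy)
    · rw [matchingInvolution_apply_matchedUps hE ⟨x, hxS⟩,
        matchingInvolution_apply_unmatchedUps hE (hU hy hyS)]
      exact matchingIso_lt hE (hU hy hyS) hxy
    · rw [matchingInvolution_apply_unmatchedUps hE (hU hx hxS),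
        matchingInvolution_apply_matchedUps hE ⟨y, hyS⟩]
      exact hxy.trans (lt_matchingIso hE ⟨y, hyS⟩)
    · rwa [matchingInvolution_apply_unmatchedUps hE (hU hx hxS),
        matchingInvolution_apply_unmatchedUps hE (hU hy hyS)]
  · have hx : x ∈ Eᶜ := mem_compl.2 hx
    have hy : y ∈ Eᶜ := mem_compl.2 hy
    rw [matchingInvolution_apply_compl hE ⟨x, hx⟩, matchingInvolution_apply_compl hE ⟨y, hy⟩]
    exact (matchingIso hE).symm.strictMono
      (show (⟨x, hx⟩ : (Eᶜ : Finset (Fin n))) < ⟨y, hy⟩ from hxy)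

end MatchingInvolution

lemma matchingInvolution_weakExcedances {π : Equiv.Perm (Fin n)} (hπ : IsInvolution π)
    (ha : Avoids321 π) : matchingInvolution (isBallot_weakExcedances hπ) = π := by
  set E := weakExcedances π
  have hE : IsBallot E := isBallot_weakExcedances hπ
  have hmaps (s : matchedUps E) : π s ∈ Eᶜ := by
    rw [mem_compl, mem_weakExcedances, hπ, not_le]
    exact (mem_matchedUps_weakExcedances hπ ha).1 s.2
  let f : matchedUps E → (Eᶜ : Finset (Fin n)) := fun s => ⟨π s, hmaps s⟩
  have hf : StrictMono f := fun s t hst =>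
    strictMonoOn_weakExcedances hπ ha (matchedUps_subset E s.2) (matchedUps_subset E t.2) hst
  have hsurj : Function.Surjective f := fun d => by
    refine ⟨⟨π d, (mem_matchedUps_weakExcedances hπ ha).2 ?_⟩, Subtype.ext (hπ d)⟩
    rw [hπ, ← not_le, ← mem_weakExcedances, ← mem_compl]
    exact d.2
  have hiso : matchingIso hE = hf.orderIsoOfSurjective f hsurj := Subsingleton.elim _ _
  refine (eq_swapAlong _ _ hπ (fun s => by rw [hiso]; rfl) fun x hS hD => ?_).symm
  have := mem_unmatchedUps_of_notMem hS hD
  rw [unmatchedUps_weakExcedances hπ ha, mem_compl, Equiv.Perm.mem_support, not_not] at this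
  exact this

noncomputable def involutionAvoiding321EquivBallot (n : ℕ) :
    {π : Equiv.Perm (Fin n) // IsInvolution π ∧ Avoids321 π} ≃
      {E : Finset (Fin n) // IsBallot E} where
  toFun π := ⟨weakExcedances π, isBallot_weakExcedances π.2.1⟩
  invFun E := ⟨matchingInvolution E.2, isInvolution_matchingInvolution E.2,
    avoids321_matchingInvolution E.2⟩
  left_inv π := Subtype.ext (matchingInvolution_weakExcedances π.2.1 π.2.2)
  right_inv E := Subtype.ext (weakExcedances_matchingInvolution E.2)

section LastStep

noncomputable def splitLast : Finset (Fin (n + 1)) ≃ Finset (Fin n) × Bool where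
  toFun E := (E.preimage Fin.castSucc (Fin.castSucc_injective n).injOn, decide (Fin.last n ∈ E))
  invFun p := p.1.map Fin.castSuccEmb ∪ if p.2 then {Fin.last n} else ∅
  left_inv E := by
    ext i
    cases i using Fin.lastCases <;> by_cases h : Fin.last n ∈ E <;> simp [h]
  right_inv p := by
    obtain ⟨E, b⟩ := p
    cases b <;> ext <;> simp

lemma countBelow_preimage_castSucc (s : Finset (Fin (n + 1))) {j : ℕ} (hj : j ≤ n) :
    countBelow (s.preimage Fin.castSucc (Fin.castSucc_injective n).injOn) j = countBelow s j := by
  rw [countBelow, countBelow, ← card_map Fin.castSuccEmb]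
  congr 1
  ext i
  simp only [mem_map, mem_filter, mem_preimage, Fin.coe_castSuccEmb]
  constructor
  · rintro ⟨a, ⟨ha, haj⟩, rfl⟩
    exact ⟨ha, by simpa using haj⟩
  · rintro ⟨hi, hij⟩
    have hin : (i : ℕ) < n := by omega
    exact ⟨i.castLT hin, ⟨by simpa using hi, by simpa using hij⟩, by simp⟩

lemma pathHeight_preimage_castSucc (E : Finset (Fin (n + 1))) {j : ℕ} (hj : j ≤ n) :
    pathHeight (E.preimage Fin.castSucc (Fin.castSucc_injective n).injOn) j = pathHeight E j := by
  rw [pathHeight, pathHeight, ← preimage_compl _ (Fin.castSucc_injective n),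
    countBelow_preimage_castSucc _ hj, countBelow_preimage_castSucc _ hj]

lemma isBallot_iff_isBallot_preimage_castSucc (hn : Odd n) (E : Finset (Fin (n + 1))) :
    IsBallot E ↔ IsBallot (E.preimage Fin.castSucc (Fin.castSucc_injective n).injOn) := by
  set E' := E.preimage Fin.castSucc (Fin.castSucc_injective n).injOn
  have hE'n : pathHeight E' n = pathHeight E n := pathHeight_preimage_castSucc E le_rfl
  constructor
  · intro hE j
    rcases le_total j n with hj | hj
    · rw [pathHeight_preimage_castSucc E hj]; exact hE j
    · rw [pathHeight_of_le E' hj, ← pathHeight_of_le E' le_rfl, hE'n]; exact hE n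
  · intro hE' j
    rcases le_or_gt j n with hj | hj
    · rw [← pathHeight_preimage_castSucc E hj]; exact hE' j
    have := pathHeight_ne_zero_of_odd (E := E') hn
    have hlast := pathHeight_succ E (Fin.last n)
    rw [Fin.val_last] at hlast
    rw [pathHeight_of_le E hj, ← pathHeight_of_le E le_rfl, hlast]
    have := hE' n
    split_ifs <;> omega

lemma card_ballot_succ_of_odd (hn : Odd n) :
    Nat.card {E : Finset (Fin (n + 1)) // IsBallot E} =
      2 * Nat.card {E : Finset (Fin n) // IsBallot E} := by
  rw [Nat.card_congr ((splitLast.subtypeEquiv (isBallot_iff_isBallot_preimage_castSucc hn)).trans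
    Equiv.prodSubtypeFstEquivSubtypeProd), Nat.card_prod, Nat.card_eq_fintype_card (α := Bool),
    Fintype.card_bool, mul_comm]

end LastStep

end

/-- |I(321)_{2m}| = 2 |I(321)_{2m-1}| for every m ≥ 1. -/
theorem card_even_eq_two_mul_card_odd (m : ℕ) (hm : 1 ≤ m) :
    Nat.card {π : Equiv.Perm (Fin (2 * m)) // IsInvolution π ∧ Avoids321 π} =
      2 * Nat.card {π : Equiv.Perm (Fin (2 * m - 1)) // IsInvolution π ∧ Avoids321 π} := by
  obtain ⟨n, hn, h2m⟩ : ∃ n, Odd n ∧ 2 * m = n + 1 := ⟨2 * m - 1, ⟨m - 1, by omega⟩, by omega⟩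
  rw [Nat.card_congr (involutionAvoiding321EquivBallot _),
    Nat.card_congr (involutionAvoiding321EquivBallot _), h2m, Nat.add_sub_cancel]
  exact card_ballot_succ_of_odd hn
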